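/- Suppose that X is a metric space and φ : ℕ^ℕ → X is continuous and nowhere constant. Then there is a ∧-embedding π : ℕ^{<ℕ} → ℕ^{<ℕ} such that for all i ∈ ℕ and t ∈ ℕ^{<ℕ}, the closure of φ[{b ∈ ℕ^ℕ : π(t⌢⟨i⟩) ⊑ b}] is disjoint from the closure of ⋃_{j ∈ ℕ, j ≠ i} φ[{b ∈ ℕ^ℕ : π(t⌢⟨j⟩) ⊑ b}]. -/

import Mathlib

open Set Topology TopologicalSpace
open scoped ENNReal

/-- `t` is an initial segment of `b : ℕ → ℕ`. -/
def PrefixFun (t : List ℕ) (b : ℕ → ℕ) : Prop :=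
  ∀ (i : ℕ) (h : i < t.length), t.get ⟨i, h⟩ = b i

/-- The meet `s ∧ t`: the longest common initial segment of two finite sequences. -/
def listMeet : List ℕ → List ℕ → List ℕ
  | a :: s, b :: t => if a = b then a :: listMeet s t else []
  | _, _ => []

/-- A `∧`-embedding: an injection preserving meets. -/
def MeetEmbedding (π : List ℕ → List ℕ) : Prop :=
  Function.Injective π ∧ ∀ s t, π (listMeet s t) = listMeet (π s) (π t)

/-- The induced map on Baire space: `limSeq π b = ⋃ i, π (b ↾ i)`. -/
def limSeq (π : List ℕ → List ℕ) (b : ℕ → ℕ) : ℕ → ℕ := fun n =>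
  (π (List.ofFn fun i : Fin (n + 1) => b i)).getD n 0

/-- Points of the space `ℕ^{≤ℕ}_*`: finite sequences, infinite sequences, and
finite sequences followed by `∞`. -/
inductive NStar : Type
  | fin : List ℕ → NStar
  | inf : (ℕ → ℕ) → NStar
  | lim : List ℕ → NStar

namespace NStar

/-- `t ⊑ c`. -/
def PrefixOf (t : List ℕ) : NStar → Prop
  | fin s => t <+: s
  | inf b => PrefixFun t b
  | lim s => t <+: s

/-- The basic "cylinder" `N_t = {c | t ⊑ c}`. -/
def cyl (t : List ℕ) : Set NStar := {c | PrefixOf t c}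

/-- The smallest topology in which every `{t}` and every `N_t` is clopen. -/
instance : TopologicalSpace NStar :=
  TopologicalSpace.generateFrom
    {S | ∃ t : List ℕ, S = {fin t} ∨ S = ({fin t} : Set NStar)ᶜ ∨ S = cyl t ∨ S = (cyl t)ᶜ}

def IsFin (c : NStar) : Prop := ∃ t, c = fin t
def IsInf (c : NStar) : Prop := ∃ b, c = inf b
def IsLim (c : NStar) : Prop := ∃ t, c = lim t

/-- The extension of `π : ℕ^{<ℕ} → ℕ^{<ℕ}` to `ℕ^{≤ℕ}_*`. -/
def hat (π : List ℕ → List ℕ) : NStar → NStar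
  | fin t => fin (π t)
  | inf b => inf (limSeq π b)
  | lim t => lim (π t)

end NStar

/-- `ℕ^ℕ_* = ℕ^{≤ℕ}_* ∖ ℕ^{<ℕ}`. -/
abbrev NNStar : Type := {c : NStar // ¬ c.IsFin}
/-- `ℕ^ℕ_* ∖ ℕ^ℕ = {t⌢⟨∞⟩ : t ∈ ℕ^{<ℕ}}`. -/
abbrev NLim : Type := {c : NStar // c.IsLim}
/-- The copy of `ℕ^{<ℕ}` inside `ℕ^{≤ℕ}_*` (a discrete subspace). -/
abbrev NFin : Type := {c : NStar // c.IsFin}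
/-- `ℕ^{≤ℕ} = ℕ^{<ℕ} ∪ ℕ^ℕ`. -/
abbrev NFinInf : Type := {c : NStar // ¬ c.IsLim}
/-- `ℕ^{≤ℕ}_* ∖ ℕ^ℕ`. -/
abbrev NFinLim : Type := {c : NStar // ¬ c.IsInf}

def infPt (b : ℕ → ℕ) : NNStar :=
  ⟨NStar.inf b, by rintro ⟨t, h⟩; exact NStar.noConfusion h⟩

def limPt (t : List ℕ) : NLim := ⟨NStar.lim t, t, rfl⟩

def finPt (t : List ℕ) : NFin := ⟨NStar.fin t, t, rfl⟩

/-- The extension `π̂` restricted to `ℕ^ℕ_*`. -/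
def hatNN (π : List ℕ → List ℕ) (c : NNStar) : NNStar :=
  ⟨c.1.hat π, by
    obtain ⟨c, hc⟩ := c
    cases c with
    | fin t => exact fun _ => hc ⟨t, rfl⟩
    | inf b => rintro ⟨t, h⟩; exact NStar.noConfusion h
    | lim t => rintro ⟨s, h⟩; exact NStar.noConfusion h⟩

/-- The extension `π̂` restricted to `ℕ^ℕ_* ∖ ℕ^ℕ`. -/
def hatLim (π : List ℕ → List ℕ) (c : NLim) : NLim :=
  ⟨c.1.hat π, by obtain ⟨c, t, rfl⟩ := c; exact ⟨π t, rfl⟩⟩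

def NLim.toNN (c : NLim) : NNStar :=
  ⟨c.1, by obtain ⟨c, t, rfl⟩ := c; rintro ⟨s, h⟩; exact NStar.noConfusion h⟩

def NLim.base (c : NLim) : List ℕ :=
  match c.1 with
  | .lim t => t
  | .fin t => t
  | .inf _ => []

/-- The map `p : t⌢⟨∞⟩ ↦ t`, with values in the discrete copy of `ℕ^{<ℕ}`. -/
def pFin (c : NLim) : NFin := finPt c.base

def NFin.toFinLim (c : NFin) : NFinLim :=
  ⟨c.1, by obtain ⟨c, t, rfl⟩ := c; rintro ⟨b, h⟩; exact NStar.noConfusion h⟩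

def NFin.toFinInf (c : NFin) : NFinInf :=
  ⟨c.1, by obtain ⟨c, t, rfl⟩ := c; rintro ⟨s, h⟩; exact NStar.noConfusion h⟩

/-- A closed continuous embedding of `φ` into `φ'`: a pair of injective continuous closed
maps `πX : X → X'` and `πY : cl(φ[X]) → cl(φ'[X'])` with `φ' ∘ πX = πY ∘ φ`. -/
def ClosedContinuousEmbedding {X Y X' Y' : Type*} [TopologicalSpace X] [TopologicalSpace Y]
    [TopologicalSpace X'] [TopologicalSpace Y'] (φ : X → Y) (φ' : X' → Y') : Prop :=
  ∃ (πX : X → X') (πY : closure (Set.range φ) → closure (Set.range φ')),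
    Continuous πX ∧ Function.Injective πX ∧ IsClosedMap πX ∧
    Continuous πY ∧ Function.Injective πY ∧ IsClosedMap πY ∧
    ∀ x : X, φ' (πX x) = (πY ⟨φ x, subset_closure ⟨x, rfl⟩⟩ : Y')

/-- A topological space is analytic if it is a continuous image of a closed subset of `ℕ^ℕ`. -/
def IsAnalytic (X : Type*) [TopologicalSpace X] : Prop :=
  ∃ C : Set (ℕ → ℕ), IsClosed C ∧ ∃ f : C → X, Continuous f ∧ Function.Surjective f

/-- Baire measurable: preimages of open sets have the Baire property. -/
def BaireMeasurableFun {X Y : Type*} [TopologicalSpace X] [TopologicalSpace Y]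
    (φ : X → Y) : Prop :=
  ∀ V : Set Y, IsOpen V → ∃ U : Set X, IsOpen U ∧ IsMeagre (symmDiff (φ ⁻¹' V) U)

/-- Baire class one: preimages of open sets are `Fσ`. -/
def BaireClassOneFun {X Y : Type*} [TopologicalSpace X] [TopologicalSpace Y]
    (φ : X → Y) : Prop :=
  ∀ V : Set Y, IsOpen V → ∃ F : ℕ → Set X, (∀ n, IsClosed (F n)) ∧ φ ⁻¹' V = ⋃ n, F n

/-- σ-continuous with closed witnesses. -/
def SigmaContClosed {X Y : Type*} [TopologicalSpace X] [TopologicalSpace Y]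
    (φ : X → Y) : Prop :=
  ∃ F : ℕ → Set X, (∀ n, IsClosed (F n)) ∧ (⋃ n, F n) = Set.univ ∧ ∀ n, ContinuousOn φ (F n)

/-- Borel: preimages of open sets are Borel. -/
def BorelFun {X Y : Type*} [TopologicalSpace X] [TopologicalSpace Y] (φ : X → Y) : Prop :=
  ∀ V : Set Y, IsOpen V → @MeasurableSet X (borel X) (φ ⁻¹' V)

/-- The function on `ℕ^ℕ_*` agreeing with `f` on `ℕ^ℕ` and with `g` on `ℕ^ℕ_* ∖ ℕ^ℕ`,
with values in the topological disjoint union. -/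
def combine2 {A B : Type*} (f : (ℕ → ℕ) → A) (g : NLim → B) : NNStar → A ⊕ B := fun c =>
  match c with
  | ⟨.fin t, h⟩ => absurd ⟨t, rfl⟩ h
  | ⟨.inf b, _⟩ => Sum.inl (f b)
  | ⟨.lim t, _⟩ => Sum.inr (g (limPt t))

section Aux

lemma listMeet_nil_left (t : List ℕ) : listMeet [] t = [] := by
  cases t <;> rfl

lemma listMeet_nil_right (s : List ℕ) : listMeet s [] = [] := by
  cases s <;> rfl

lemma listMeet_self (s : List ℕ) : listMeet s s = s := by
  induction s with
  | nil => rfl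
  | cons a s ih => simp [listMeet, ih]

lemma listMeet_prefix_left (s t : List ℕ) : listMeet s t <+: s := by
  induction s generalizing t with
  | nil => simp [listMeet_nil_left]
  | cons a s ih =>
    cases t with
    | nil => simp [listMeet_nil_right]
    | cons b t =>
      by_cases h : a = b
      · obtain ⟨r, hr⟩ := ih t
        exact ⟨r, by simp [listMeet, h, hr]⟩
      · simp [listMeet, h]

lemma listMeet_of_prefix {s t : List ℕ} (h : s <+: t) : listMeet s t = s := by
  obtain ⟨r, rfl⟩ := h
  induction s with
  | nil => simp [listMeet_nil_left]
  | cons a s ih => simp [listMeet, ih]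

lemma listMeet_of_prefix' {s t : List ℕ} (h : s <+: t) : listMeet t s = s := by
  obtain ⟨r, rfl⟩ := h
  induction s with
  | nil => simp [listMeet_nil_right]
  | cons a s ih => simp [listMeet, ih]

lemma listMeet_append (u a b : List ℕ) :
    listMeet (u ++ a) (u ++ b) = u ++ listMeet a b := by
  induction u with
  | nil => simp
  | cons c u ih => simp [listMeet, ih]

lemma listMeet_branch {x y : ℕ} {u A B : List ℕ} (hxy : x ≠ y)
    (hA : u ++ [x] <+: A) (hB : u ++ [y] <+: B) : listMeet A B = u := by
  obtain ⟨r, rfl⟩ := hA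
  obtain ⟨r', rfl⟩ := hB
  rw [List.append_assoc, List.append_assoc, listMeet_append]
  simp [listMeet, hxy]

lemma listMeet_prefix_right (s t : List ℕ) : listMeet s t <+: t := by
  induction s generalizing t with
  | nil => simp [listMeet_nil_left]
  | cons a s ih =>
    cases t with
    | nil => simp [listMeet_nil_right]
    | cons b t =>
      by_cases h : a = b
      · obtain ⟨r, hr⟩ := ih t
        exact ⟨r, by simp [listMeet, h, hr]⟩
      · simp [listMeet, h]

section fold

variable {child : List ℕ → ℕ → List ℕ}
variable (hch : ∀ u i, ∃ k, u ++ [k] <+: child u i)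

include hch

lemma foldl_prefix (u : List ℕ) (l : List ℕ) : u <+: List.foldl child u l := by
  induction l generalizing u with
  | nil => simp
  | cons a l ih =>
    obtain ⟨k, hk⟩ := hch u a
    calc u <+: u ++ [k] := ⟨[k], rfl⟩
    _ <+: child u a := hk
    _ <+: List.foldl child (child u a) l := ih _
    _ = List.foldl child u (a :: l) := rfl

lemma foldl_length (u : List ℕ) (l : List ℕ) :
    u.length + l.length ≤ (List.foldl child u l).length := by
  induction l generalizing u with
  | nil => simp
  | cons a l ih =>
    obtain ⟨k, hk⟩ := hch u a
    have h1 : u.length + 1 ≤ (child u a).length := by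
      simpa using hk.length_le
    have := ih (child u a)
    simp only [List.foldl_cons, List.length_cons]
    omega

lemma foldl_meet
    (hk : ∀ u i j, i ≠ j → ∃ a b, a ≠ b ∧ u ++ [a] <+: child u i ∧ u ++ [b] <+: child u j)
    (s : List ℕ) : ∀ (t u : List ℕ),
    List.foldl child u (listMeet s t) = listMeet (List.foldl child u s) (List.foldl child u t) := by
  induction s with
  | nil =>
    intro t u
    rw [listMeet_nil_left]
    exact (listMeet_of_prefix (foldl_prefix hch u t)).symm
  | cons a s ih =>
    intro t u
    cases t with
    | nil =>
      rw [listMeet_nil_right, List.foldl_nil]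
      exact (listMeet_of_prefix' (foldl_prefix hch u (a :: s))).symm
    | cons b t =>
      by_cases h : a = b
      · subst h
        simpa [listMeet, List.foldl_cons] using ih t (child u a)
      · obtain ⟨x, y, hxy, hx, hy⟩ := hk u a b h
        have hA : u ++ [x] <+: List.foldl child u (a :: s) :=
          hx.trans (by simpa using foldl_prefix hch (child u a) s)
        have hB : u ++ [y] <+: List.foldl child u (b :: t) :=
          hy.trans (by simpa using foldl_prefix hch (child u b) t)
        rw [show listMeet (a :: s) (b :: t) = [] by simp [listMeet, h],
          List.foldl_nil, listMeet_branch hxy hA hB]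

lemma foldl_injective
    (hk : ∀ u i j, i ≠ j → ∃ a b, a ≠ b ∧ u ++ [a] <+: child u i ∧ u ++ [b] <+: child u j) :
    Function.Injective (fun l => List.foldl child [] l) := by
  intro s t hst
  simp only at hst
  have hms := foldl_meet hch hk s t ([])
  rw [hst, listMeet_self] at hms
  have hmt : List.foldl child [] (listMeet s t) = List.foldl child [] t := hms
  -- listMeet s t is a prefix of s with the same foldl length, hence equals s; same for t
  have key : ∀ w : List ℕ, listMeet s t <+: w →
      List.foldl child [] (listMeet s t) = List.foldl child [] w → listMeet s t = w := by
    intro w hpre heq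
    obtain ⟨r, hr⟩ := hpre
    rcases r with _ | ⟨c, r⟩
    · simpa using hr
    · exfalso
      have : List.foldl child [] w = List.foldl child (List.foldl child [] (listMeet s t)) (c :: r) := by
        rw [← hr, List.foldl_append]
      have hlen := foldl_length hch (List.foldl child [] (listMeet s t)) (c :: r)
      rw [← this, ← heq] at hlen
      simp at hlen
  have h1 := key s (listMeet_prefix_left s t) (hms.trans hst.symm)
  have h2 := key t (listMeet_prefix_right s t) hmt
  rw [← h1, h2]

end fold

lemma prefixFun_ext (t : List ℕ) : PrefixFun t (fun n => t.getD n 0) := by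
  intro i h
  show t[i] = t.getD i 0
  rw [List.getD_eq_getElem _ _ h]

lemma prefixFun_mono {s t : List ℕ} (h : s <+: t) {b : ℕ → ℕ}
    (hb : PrefixFun t b) : PrefixFun s b := by
  intro i hi
  have hlen : i < t.length := lt_of_lt_of_le hi h.length_le
  rw [← hb i hlen]
  obtain ⟨r, rfl⟩ := h
  simp [List.get_eq_getElem, List.getElem_append_left hi]

lemma prefixFun_ofFn {b : ℕ → ℕ} (N : ℕ) :
    PrefixFun (List.ofFn fun i : Fin N => b i) b := by
  intro i h
  simp only [List.get_ofFn]
  simp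

lemma prefix_ofFn {t : List ℕ} {b : ℕ → ℕ} (hb : PrefixFun t b) {N : ℕ}
    (hN : t.length ≤ N) : t <+: List.ofFn fun i : Fin N => b i := by
  rw [List.prefix_iff_eq_take]
  apply List.ext_get
  · simp [hN]
  · intro n h1 h2
    have hn : n < t.length := h1
    have := hb n hn
    simp only [List.getElem_take', List.get_eq_getElem, List.get_ofFn] at *
    simp_all

lemma prefixFun_ofFn_iff {b b' : ℕ → ℕ} {N : ℕ}
    (h : PrefixFun (List.ofFn fun i : Fin N => b i) b') :
    ∀ m < N, b' m = b m := by
  intro m hm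
  have hm' : m < (List.ofFn fun i : Fin N => b i).length := by simp [hm]
  have := h m hm'
  simpa [List.get_ofFn] using this.symm

lemma isOpen_cyl (t : List ℕ) : IsOpen {b : ℕ → ℕ | PrefixFun t b} := by
  have : {b : ℕ → ℕ | PrefixFun t b} =
      ⋂ i : Fin t.length, {b : ℕ → ℕ | t.get i = b i} := by
    ext b
    simp only [Set.mem_setOf_eq, Set.mem_iInter]
    constructor
    · exact fun h i => h i i.2
    · exact fun h i hi => h ⟨i, hi⟩
  rw [this]
  exact isOpen_iInter_of_finite fun i =>
    (continuous_apply (i : ℕ)).isOpen_preimage _ (isOpen_discrete _)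

/-- small cylinders around a point from continuity -/
lemma exists_small_cylinder {X : Type*} [MetricSpace X] {φ : (ℕ → ℕ) → X}
    (hc : Continuous φ) (b₀ : ℕ → ℕ) {ε : ℝ} (hε : 0 < ε) :
    ∃ n : ℕ, ∀ b : ℕ → ℕ, (∀ m < n, b m = b₀ m) → dist (φ b) (φ b₀) < ε := by
  have hU : IsOpen (φ ⁻¹' Metric.ball (φ b₀) ε) := hc.isOpen_preimage _ Metric.isOpen_ball
  have hb₀ : b₀ ∈ φ ⁻¹' Metric.ball (φ b₀) ε := by simp [hε]
  obtain ⟨I, u, hIu, hsub⟩ := isOpen_pi_iff.mp hU b₀ hb₀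
  refine ⟨I.sup id + 1, fun b hb => ?_⟩
  have : b ∈ (I : Set ℕ).pi u := by
    intro a ha
    have : b a = b₀ a := hb a (Nat.lt_succ_of_le (Finset.le_sup (f := id) ha))
    rw [this]
    exact (hIu a ha).2
  simpa [Metric.mem_ball, dist_comm] using hsub this

variable {X : Type*} [MetricSpace X] {φ : (ℕ → ℕ) → X} (hc : Continuous φ)
  (hnc : ∀ U : Set (ℕ → ℕ), IsOpen U → U.Nonempty → ¬ ∃ x, ∀ b ∈ U, φ b = x)

include hc hnc

lemma image_cyl_infinite (u : List ℕ) : (φ '' {b | PrefixFun u b}).Infinite := by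
  intro hfin
  set b₀ : ℕ → ℕ := fun n => u.getD n 0 with hb₀def
  have hb₀ : b₀ ∈ {b | PrefixFun u b} := prefixFun_ext u
  set x₀ := φ b₀ with hx₀
  have hx₀mem : x₀ ∈ φ '' {b | PrefixFun u b} := ⟨b₀, hb₀, rfl⟩
  set D := (φ '' {b | PrefixFun u b}) \ {x₀} with hD
  have hDfin : D.Finite := hfin.diff
  rcases D.eq_empty_or_nonempty with hDe | hDne
  · -- φ constant on the cylinder
    refine hnc _ (isOpen_cyl u) ⟨b₀, hb₀⟩ ⟨x₀, fun b hb => ?_⟩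
    by_contra hne
    have : φ b ∈ D := ⟨⟨b, hb, rfl⟩, hne⟩
    rw [hDe] at this
    exact this
  · obtain ⟨y₀, hy₀, hy₀min⟩ := Set.exists_min_image D (dist x₀) hDfin hDne
    have hρ : 0 < dist x₀ y₀ := by
      rw [dist_pos]
      exact fun h => hy₀.2 (by simp [← h])
    set U := {b | PrefixFun u b} ∩ φ ⁻¹' Metric.ball x₀ (dist x₀ y₀) with hU
    refine hnc U ((isOpen_cyl u).inter (hc.isOpen_preimage _ Metric.isOpen_ball))
      ⟨b₀, hb₀, by simp [hρ, ← hx₀]⟩ ⟨x₀, fun b hb => ?_⟩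
    by_contra hne
    have hmem : φ b ∈ D := ⟨⟨b, hb.1, rfl⟩, hne⟩
    have h1 := hy₀min _ hmem
    have h2 : dist x₀ (φ b) < dist x₀ y₀ := by
      have := hb.2
      simpa [dist_comm] using this
    linarith

lemma exists_selection (u : List ℕ) :
    ∃ g : ℕ → (ℕ → ℕ), (∀ n, PrefixFun (u ++ [n]) (g n)) ∧
      ∀ m n, m < n → φ (g m) ≠ φ (g n) := by
  have key : ∀ (n : ℕ) (L : List (ℕ → ℕ)),
      ∃ b, PrefixFun (u ++ [n]) b ∧ ∀ c ∈ L, φ c ≠ φ b := by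
    intro n L
    have hinf := image_cyl_infinite hc hnc (u ++ [n])
    have hLf : (φ '' {c | c ∈ L}).Finite := (L.finite_toSet).image φ
    obtain ⟨x, hx⟩ := (hinf.diff hLf).nonempty
    obtain ⟨b, hb, rfl⟩ := hx.1
    exact ⟨b, hb, fun c hcL hce => hx.2 ⟨c, hcL, hce⟩⟩
  classical
  let G : ℕ → List (ℕ → ℕ) := fun n =>
    Nat.rec [] (fun m L => L ++ [Classical.choose (key m L)]) n
  let g : ℕ → (ℕ → ℕ) := fun n => Classical.choose (key n (G n))
  have hGsucc : ∀ n, G (n + 1) = G n ++ [g n] := fun n => rfl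
  have hmem : ∀ m n, m < n → g m ∈ G n := by
    intro m n
    induction n with
    | zero => omega
    | succ n ih =>
      intro hmn
      rw [hGsucc]
      rcases Nat.lt_succ_iff_lt_or_eq.mp hmn with h | h
      · exact List.mem_append_left _ (ih h)
      · subst h; exact List.mem_append_right _ (by simp)
  refine ⟨g, fun n => (Classical.choose_spec (key n (G n))).1, fun m n hmn => ?_⟩
  exact (Classical.choose_spec (key n (G n))).2 _ (hmem m n hmn)

omit hc hnc in
set_option linter.unusedSectionVars false in
lemma exists_separated_subseq {X : Type*} [MetricSpace X] (z : ℕ → X)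
    (hz : ∀ m n, m ≠ n → z m ≠ z n) :
    ∃ (j : ℕ → ℕ) (δ : ℕ → ℝ), StrictMono j ∧ (∀ i, 0 < δ i) ∧
      ∀ i i', i ≠ i' → δ i ≤ dist (z (j i)) (z (j i')) := by
  classical
  by_cases hacc : ∃ i₀, ∀ ε > (0:ℝ), ∃ m, m ≠ i₀ ∧ dist (z m) (z i₀) < ε
  · obtain ⟨i₀, hi₀⟩ := hacc
    -- the set of close points is infinite
    have hinfmany : ∀ ε > (0:ℝ), {m | m ≠ i₀ ∧ dist (z m) (z i₀) < ε}.Infinite := by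
      intro ε hε
      intro hfin
      obtain ⟨m₁, hm₁, hmin⟩ := Set.exists_min_image _ (fun m => dist (z m) (z i₀)) hfin
        (hi₀ ε hε)
      have hpos : 0 < dist (z m₁) (z i₀) := dist_pos.mpr (hz _ _ hm₁.1)
      obtain ⟨m₂, hm₂, hm₂d⟩ := hi₀ (min ε (dist (z m₁) (z i₀))) (lt_min hε hpos)
      have : m₂ ∈ {m | m ≠ i₀ ∧ dist (z m) (z i₀) < ε} :=
        ⟨hm₂, lt_of_lt_of_le hm₂d (min_le_left _ _)⟩
      have := hmin _ this
      have := lt_of_lt_of_le hm₂d (min_le_right _ _)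
      linarith
    have step : ∀ p : ℕ, p ≠ i₀ →
        ∃ m, (m ≠ i₀ ∧ dist (z m) (z i₀) < dist (z p) (z i₀) / 2) ∧ p < m := by
      intro p hp
      have hd : 0 < dist (z p) (z i₀) := dist_pos.mpr (hz _ _ hp)
      exact (hinfmany _ (half_pos hd)).exists_gt p
    obtain ⟨m0, hm0, _⟩ := hi₀ 1 one_pos
    let st : ℕ → ℕ := fun p => if h : p ≠ i₀ then Classical.choose (step p h) else 0
    let j : ℕ → ℕ := fun k => Nat.rec m0 (fun _ p => st p) k
    have hjsucc : ∀ k, j (k + 1) = st (j k) := fun k => rfl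
    have hne : ∀ k, j k ≠ i₀ := by
      intro k
      induction k with
      | zero => exact hm0
      | succ k ih =>
        rw [hjsucc, show st (j k) = Classical.choose (step (j k) ih) from dif_pos ih]
        exact (Classical.choose_spec (step (j k) ih)).1.1
    have hstep : ∀ k, j k < j (k + 1) ∧
        dist (z (j (k + 1))) (z i₀) < dist (z (j k)) (z i₀) / 2 := by
      intro k
      have h := hne k
      rw [hjsucc, show st (j k) = Classical.choose (step (j k) h) from dif_pos h]
      exact ⟨(Classical.choose_spec (step (j k) h)).2,
        (Classical.choose_spec (step (j k) h)).1.2⟩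
    set d : ℕ → ℝ := fun k => dist (z (j k)) (z i₀) with hd
    have hdpos : ∀ k, 0 < d k := fun k => dist_pos.mpr (hz _ _ (hne k))
    have hdlt : ∀ k l, k < l → d l < d k / 2 := by
      intro k l
      induction l with
      | zero => omega
      | succ l ih =>
        intro hkl
        rcases Nat.lt_succ_iff_lt_or_eq.mp hkl with h | h
        · have h1 := (hstep l).2
          have h2 := ih h
          have := hdpos (l + 1)
          simp only [hd] at *
          linarith
        · rw [h]; exact (hstep l).2
    refine ⟨j, fun k => d k / 2, strictMono_nat_of_lt_succ (fun k => (hstep k).1),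
      fun k => half_pos (hdpos k), ?_⟩
    have key : ∀ k l, k < l → d k / 2 ≤ dist (z (j k)) (z (j l)) ∧
        d l / 2 ≤ dist (z (j k)) (z (j l)) := by
      intro k l hkl
      have h1 := hdlt k l hkl
      have h2 : d k - d l ≤ dist (z (j k)) (z (j l)) := by
        have := abs_dist_sub_le (z (j k)) (z (j l)) (z i₀)
        have := abs_le.mp this
        simp only [hd] at *
        linarith [this.2]
      constructor <;> [linarith; linarith [hdpos k, hdpos l]]
    intro i i' hii
    rcases lt_or_gt_of_ne hii with h | h
    · exact (key i i' h).1
    · rw [dist_comm]; exact (key i' i h).2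
  · push_neg at hacc
    choose ε hε hsep using hacc
    refine ⟨id, ε, strictMono_id, hε, fun i i' hii => ?_⟩
    rw [dist_comm]
    exact hsep i i' (Ne.symm hii)


omit hc hnc in
lemma cylSmallImage {b₀ : ℕ → ℕ} {n : ℕ} {ε : ℝ}
    (hn : ∀ b : ℕ → ℕ, (∀ m < n, b m = b₀ m) → dist (φ b) (φ b₀) < ε) {N : ℕ} (hN : n ≤ N) :
    φ '' {b | PrefixFun (List.ofFn fun i : Fin N => b₀ i) b} ⊆ Metric.ball (φ b₀) ε := by
  rintro x ⟨b, hb, rfl⟩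
  have := prefixFun_ofFn_iff hb
  rw [Metric.mem_ball]
  exact hn b fun m hm => this m (lt_of_lt_of_le hm hN)

lemma child_exists (u : List ℕ) :
    ∃ (v : ℕ → List ℕ) (k : ℕ → ℕ), Function.Injective k ∧ (∀ i, u ++ [k i] <+: v i) ∧
      ∀ i : ℕ, closure (φ '' {b | PrefixFun (v i) b}) ∩
        closure (⋃ j ∈ {j : ℕ | j ≠ i}, φ '' {b | PrefixFun (v j) b}) = ∅ := by
  classical
  obtain ⟨g, hgpre, hgne⟩ := exists_selection hc hnc u
  set z : ℕ → X := fun n => φ (g n) with hzdef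
  have hz : ∀ m n, m ≠ n → z m ≠ z n := by
    intro m n hmn
    rcases lt_or_gt_of_ne hmn with h | h
    · exact hgne m n h
    · exact (hgne n m h).symm
  obtain ⟨j, δ, hjmono, hδpos, hδsep⟩ := exists_separated_subseq z hz
  have hcont : ∀ i : ℕ, ∃ n : ℕ, ∀ b : ℕ → ℕ,
      (∀ m < n, b m = g (j i) m) → dist (φ b) (φ (g (j i))) < δ i / 4 := fun i =>
    exists_small_cylinder hc (g (j i)) (by linarith [hδpos i])
  choose n hn using hcont
  set N : ℕ → ℕ := fun i => max (n i) (u.length + 1) with hNdef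
  set v : ℕ → List ℕ := fun i => List.ofFn fun m : Fin (N i) => g (j i) m with hvdef
  have hpre : ∀ i, u ++ [j i] <+: v i := by
    intro i
    apply prefix_ofFn (hgpre (j i))
    simp [hNdef]
  have hball : ∀ i, φ '' {b | PrefixFun (v i) b} ⊆ Metric.ball (z (j i)) (δ i / 4) :=
    fun i => cylSmallImage (φ := φ) (hn i) (le_max_left _ _)
  refine ⟨v, j, hjmono.injective, hpre, fun i => ?_⟩
  rw [Set.eq_empty_iff_forall_notMem]
  rintro x ⟨hx1, hx2⟩
  have hxz : dist x (z (j i)) ≤ δ i / 4 := by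
    have h1 : closure (φ '' {b | PrefixFun (v i) b}) ⊆
        Metric.closedBall (z (j i)) (δ i / 4) :=
      closure_minimal ((hball i).trans Metric.ball_subset_closedBall) Metric.isClosed_closedBall
    exact h1 hx1
  obtain ⟨w, hw, hxw⟩ := Metric.mem_closure_iff.mp hx2 (δ i / 4) (by linarith [hδpos i])
  simp only [Set.mem_iUnion, Set.mem_setOf_eq] at hw
  obtain ⟨i', hi', hwmem⟩ := hw
  have hwz : dist w (z (j i')) < δ i' / 4 := hball i' hwmem
  have hD1 : δ i ≤ dist (z (j i)) (z (j i')) := hδsep i i' (Ne.symm hi')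
  have hD2 : δ i' ≤ dist (z (j i)) (z (j i')) := by
    rw [dist_comm]; exact hδsep i' i hi'
  have htri : dist (z (j i)) (z (j i')) ≤ dist x (z (j i)) + dist x w + dist w (z (j i')) := by
    have t1 := dist_triangle (z (j i)) x (z (j i'))
    have t2 := dist_triangle x w (z (j i'))
    rw [dist_comm (z (j i)) x] at t1
    linarith
  have hpos : 0 < dist (z (j i)) (z (j i')) := lt_of_lt_of_le (hδpos i) hD1
  linarith


end Aux


/-- separating images of cylinders for nowhere constant continuous maps. -/
theorem stmt_11 {X : Type*} [MetricSpace X] (φ : (ℕ → ℕ) → X) (hc : Continuous φ)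
    (hnc : ∀ U : Set (ℕ → ℕ), IsOpen U → U.Nonempty → ¬ ∃ x, ∀ b ∈ U, φ b = x) :
    ∃ π : List ℕ → List ℕ, MeetEmbedding π ∧
      ∀ (i : ℕ) (t : List ℕ),
        closure (φ '' {b | PrefixFun (π (t ++ [i])) b}) ∩
          closure (⋃ j ∈ {j : ℕ | j ≠ i}, φ '' {b | PrefixFun (π (t ++ [j])) b}) = ∅ := by
  classical
  choose v k hkinj hpre hsep using child_exists hc hnc
  set child : List ℕ → ℕ → List ℕ := fun u i => v u i with hchild
  have hch : ∀ u i, ∃ k', u ++ [k'] <+: child u i := fun u i => ⟨k u i, hpre u i⟩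
  have hkk : ∀ u i j, i ≠ j →
      ∃ a b, a ≠ b ∧ u ++ [a] <+: child u i ∧ u ++ [b] <+: child u j :=
    fun u i j h => ⟨k u i, k u j, (hkinj u).ne h, hpre u i, hpre u j⟩
  refine ⟨fun l => List.foldl child [] l,
    ⟨foldl_injective hch hkk, fun s t => foldl_meet hch hkk s t []⟩, fun i t => ?_⟩
  have hfold : ∀ m : ℕ, List.foldl child [] (t ++ [m]) = v (List.foldl child [] t) m := by
    intro m
    rw [List.foldl_append]
    rfl
  simp only [hfold]
  exact hsep (List.foldl child [] t) i
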